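/- Let K be a field and F/K a Galois extension of degree 3 such that every proper finite separable extension of K contains F. Then for each n, K has at most one separable field extension of degree n up to isomorphism. -/

import Mathlib

/-!
Embed `L₁` and `L₂` into a finite Galois extension `M/K`. A proper subgroup `H` of `Gal(M/K)`
has a nontrivial fixed field, which therefore receives `F`; as `F/K` is normal, its image in
`M` does not depend on the embedding, so `H` fixes it. Thus every proper subgroup lies in the
proper subgroup `Gal(M/F)`, which forces `Gal(M/K)` to be cyclic. Subgroups of a finite cyclic
group are determined by their order, so by the Galois correspondence the images of `L₁` and
`L₂` in `M` coincide.
-/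

open IntermediateField Module

theorem Subgroup.eq_of_card_eq_of_isCyclic {G : Type*} [Group G] [Finite G] [IsCyclic G]
    {H J : Subgroup G} (h : Nat.card H = Nat.card J) : H = J := by
  classical
  have : Fintype G := Fintype.ofFinite G
  -- `J` is the whole solution set of `a ^ |J| = 1`, which has at most `|J|` elements.
  suffices key : ∀ J : Subgroup G, (J : Set G) = {a | a ^ Nat.card J = 1} by
    exact SetLike.coe_injective (by rw [key H, key J, h])
  intro J
  have hsub : (J : Set G) ⊆ {a | a ^ Nat.card J = 1} := fun a ha =>
    congrArg Subtype.val (pow_card_eq_one' (G := J) (x := ⟨a, ha⟩))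
  refine Set.eq_of_subset_of_ncard_le hsub ?_ (Set.toFinite _)
  rw [Set.ncard_eq_toFinset_card', Set.toFinset_ofPred, ← Nat.card_coe_set_eq,
    SetLike.coe_sort_coe]
  exact IsCyclic.card_pow_eq_one_le Nat.card_pos

theorem Subgroup.isCyclic_of_forall_ne_top_le {G : Type*} [Group G] {N : Subgroup G}
    (hN : N ≠ ⊤) (h : ∀ H : Subgroup G, H ≠ ⊤ → H ≤ N) : IsCyclic G := by
  obtain ⟨g, hg⟩ := SetLike.exists_not_mem_of_ne_top N hN
  refine isCyclic_iff_exists_zpowers_eq_top.mpr ⟨g, ?_⟩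
  by_contra hne
  exact hg (h _ hne (mem_zpowers g))

section

variable {K F M : Type*} [Field K] [Field F] [Field M] [Algebra K F] [Algebra K M]

theorem AlgHom.fieldRange_eq_of_normal [Normal K F] (φ ψ : F →ₐ[K] M) :
    φ.fieldRange = ψ.fieldRange := by
  let e : F ≃ₐ[K] φ.fieldRange := AlgEquiv.ofInjectiveField φ
  have : Normal K φ.fieldRange := Normal.of_algEquiv e
  rw [← (ψ.comp e.symm.toAlgHom).fieldRange_of_normal, ← AlgHom.map_fieldRange,
    AlgEquiv.fieldRange_eq_top, ← AlgHom.fieldRange_eq_map]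

theorem AlgHom.finrank_fieldRange {A : Type*} [Field A] [Algebra K A] (f : A →ₐ[K] M) :
    finrank K f.fieldRange = finrank K A :=
  (AlgEquiv.ofInjectiveField f).toLinearEquiv.finrank_eq.symm

theorem IntermediateField.eq_of_finrank_eq_of_isCyclic [FiniteDimensional K M] [IsGalois K M]
    [IsCyclic (M ≃ₐ[K] M)] {E₁ E₂ : IntermediateField K M}
    (h : finrank K E₁ = finrank K E₂) : E₁ = E₂ := by
  suffices hfix : fixingSubgroup E₁ = fixingSubgroup E₂ by
    rw [← IsGalois.fixedField_fixingSubgroup E₁, ← IsGalois.fixedField_fixingSubgroup E₂, hfix]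
  apply Subgroup.eq_of_card_eq_of_isCyclic
  rw [IsGalois.card_fixingSubgroup_eq_finrank, IsGalois.card_fixingSubgroup_eq_finrank]
  refine Nat.eq_of_mul_eq_mul_left finrank_pos (?_ : finrank K E₁ * _ = finrank K E₁ * _)
  rw [finrank_mul_finrank, h, finrank_mul_finrank]

theorem nonempty_algEquiv_of_finrank_eq_of_isCyclic [FiniteDimensional K M] [IsGalois K M]
    [IsCyclic (M ≃ₐ[K] M)] {A B : Type*} [Field A] [Field B] [Algebra K A] [Algebra K B]
    (f : A →ₐ[K] M) (g : B →ₐ[K] M) (h : finrank K A = finrank K B) :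
    Nonempty (A ≃ₐ[K] B) := by
  have hrange : f.fieldRange = g.fieldRange := eq_of_finrank_eq_of_isCyclic <| by
    rw [f.finrank_fieldRange, g.finrank_fieldRange, h]
  exact ⟨(AlgEquiv.ofInjectiveField f).trans
    ((equivOfEq hrange).trans (AlgEquiv.ofInjectiveField g).symm)⟩

theorem isCyclic_algEquiv_of_forall_ne_bot_nonempty_algHom [FiniteDimensional K M] [IsGalois K M]
    [Normal K F] (hF : finrank K F ≠ 1)
    (hemb : ∀ E : IntermediateField K M, E ≠ ⊥ → Nonempty (F →ₐ[K] E)) :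
    IsCyclic (M ≃ₐ[K] M) := by
  by_cases hM : (⊤ : IntermediateField K M) = ⊥
  · have : Subsingleton (M ≃ₐ[K] M) := Subgroup.subsingleton_iff.mp <|
      subsingleton_iff_bot_eq_top.mp <| by rw [← fixingSubgroup_top, hM, fixingSubgroup_bot]
    infer_instance
  obtain ⟨φ⟩ := hemb ⊤ hM
  let φ₀ : F →ₐ[K] M := (⊤ : IntermediateField K M).val.comp φ
  refine Subgroup.isCyclic_of_forall_ne_top_le (N := fixingSubgroup φ₀.fieldRange) ?_ ?_
  · intro htop
    apply hF
    rw [← φ₀.finrank_fieldRange, IntermediateField.finrank_eq_one_iff,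
      ← IsGalois.fixedField_fixingSubgroup φ₀.fieldRange, htop, IsGalois.fixedField_top]
  · intro H hH
    have hH' : fixedField H ≠ ⊥ := fun hbot => hH <| by
      rw [← fixingSubgroup_fixedField H, hbot, fixingSubgroup_bot]
    obtain ⟨ψ⟩ := hemb _ hH'
    rw [← le_iff_le, φ₀.fieldRange_eq_of_normal ((fixedField H).val.comp ψ)]
    rintro _ ⟨y, rfl⟩
    exact (ψ y).2

end

theorem exists_isGalois_nonempty_algHom_algHom (K L₁ L₂ : Type*) [Field K] [Field L₁]
    [Field L₂] [Algebra K L₁] [Algebra K L₂] [FiniteDimensional K L₁] [FiniteDimensional K L₂]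
    [Algebra.IsSeparable K L₁] [Algebra.IsSeparable K L₂] :
    ∃ M : IntermediateField K (SeparableClosure K), FiniteDimensional K M ∧ IsGalois K M ∧
      Nonempty (L₁ →ₐ[K] M) ∧ Nonempty (L₂ →ₐ[K] M) := by
  let f₁ : L₁ →ₐ[K] SeparableClosure K := IsSepClosed.lift
  let f₂ : L₂ →ₐ[K] SeparableClosure K := IsSepClosed.lift
  let M := normalClosure K L₁ (SeparableClosure K) ⊔ normalClosure K L₂ (SeparableClosure K)
  refine ⟨M, inferInstance, inferInstance, ⟨f₁.codRestrict M.toSubalgebra fun x => ?_⟩,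
    ⟨f₂.codRestrict M.toSubalgebra fun x => ?_⟩⟩
  · exact (le_sup_left : _ ≤ M) (f₁.fieldRange_le_normalClosure ⟨x, rfl⟩)
  · exact (le_sup_right : _ ≤ M) (f₂.fieldRange_le_normalClosure ⟨x, rfl⟩)

/-- Let `F/K` be a Galois extension of degree 3 such that every
proper finite separable extension of `K` contains (a copy of) `F`.  Then for
each `n`, `K` has at most one separable extension of degree `n` up to
isomorphism. -/
theorem stmt6 (K F : Type) [Field K] [Field F] [Algebra K F] [IsGalois K F]
    (h3 : Module.finrank K F = 3)
    (hmin : ∀ (L : Type) [Field L] [Algebra K L] [FiniteDimensional K L]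
      [Algebra.IsSeparable K L], Module.finrank K L ≠ 1 → Nonempty (F →ₐ[K] L)) :
    ∀ (n : ℕ) (L₁ L₂ : Type) [Field L₁] [Field L₂] [Algebra K L₁] [Algebra K L₂]
      [FiniteDimensional K L₁] [FiniteDimensional K L₂]
      [Algebra.IsSeparable K L₁] [Algebra.IsSeparable K L₂],
      Module.finrank K L₁ = n → Module.finrank K L₂ = n →
      Nonempty (L₁ ≃ₐ[K] L₂) := by
  intro n L₁ L₂ _ _ _ _ _ _ _ _ h₁ h₂
  obtain ⟨M, _, _, ⟨f₁⟩, ⟨f₂⟩⟩ := exists_isGalois_nonempty_algHom_algHom K L₁ L₂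
  have : IsCyclic (M ≃ₐ[K] M) :=
    isCyclic_algEquiv_of_forall_ne_bot_nonempty_algHom (F := F) (by omega) fun E hE =>
      hmin E (by rwa [Ne, IntermediateField.finrank_eq_one_iff])
  exact nonempty_algEquiv_of_finrank_eq_of_isCyclic f₁ f₂ (h₁.trans h₂.symm)
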